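/- Fix i ∈ {1,…,N} and j ∈ {1,…,M}. Suppose ε^{(0)}_{i,j}, ε^{(1)}_{i,j}, η_{i,j} are mean zero, (ε^{(0)}_{i,j}, ε^{(1)}_{i,j}) is independent of η_{i,j}, 0 < p_{i,j} < 1, and η_{i,j} equals 1 − p_{i,j} with probability p_{i,j} and −p_{i,j} with probability 1 − p_{i,j} (so Var(η_{i,j}) = p_{i,j}(1 − p_{i,j})). Let σ^{(a)}_{i,j} denote the standard deviation of ε^{(a)}_{i,j} and define V_{i,j} = ε^{(1)}_{i,j}·(1 + η_{i,j}/p_{i,j}) − ε^{(0)}_{i,j}·(1 − η_{i,j}/(1 − p_{i,j})). Then Var(V_{i,j}) = (σ^{(1)}_{i,j})²/p_{i,j} + (σ^{(0)}_{i,j})²/(1 − p_{i,j}); in particular, the covariance between ε^{(1)}_{i,j}·(1 + η_{i,j}/p_{i,j}) and ε^{(0)}_{i,j}·(1 − η_{i,j}/(1 − p_{i,j})) equals 0 regardless of the dependence between ε^{(0)}_{i,j} and ε^{(1)}_{i,j}. -/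

import Mathlib

open MeasureTheory ProbabilityTheory

/-! With `A = 1 + η/p` and `B = 1 - η/(1-p)`, the two-point law of `η` makes `A` and `B` the
inverse-probability weights `1{η = 1-p}/p` and `1{η = -p}/(1-p)`: they have mean one, satisfy
`A² = A/p`, `B² = B/(1-p)`, and `A B = 0`. Hence the two summands `ε⁽¹⁾A` and `ε⁽⁰⁾B` have
disjoint supports, which kills their covariance whatever the joint law of `(ε⁽⁰⁾, ε⁽¹⁾)`, and by
independence `E[(ε⁽¹⁾A)²] = E[(ε⁽¹⁾)²] E[A]/p = (σ⁽¹⁾)²/p`, and likewise for `ε⁽⁰⁾B`. -/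

/-- Variance of a real random variable: `Var X = E[(X - E X)²]`. -/
noncomputable def pVar {Ω : Type*} [MeasurableSpace Ω] (μ : Measure Ω) (X : Ω → ℝ) : ℝ :=
  ∫ ω, (X ω - ∫ ω', X ω' ∂μ) ^ 2 ∂μ

/-- Covariance of real random variables: `Cov(X,Y) = E[XY] - E[X]·E[Y]`. -/
noncomputable def pCov {Ω : Type*} [MeasurableSpace Ω] (μ : Measure Ω) (X Y : Ω → ℝ) : ℝ :=
  (∫ ω, X ω * Y ω ∂μ) - (∫ ω, X ω ∂μ) * (∫ ω, Y ω ∂μ)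

section TwoPoint

variable {p x : ℝ}

lemma abs_le_one_of_eq_or_eq (hp0 : 0 ≤ p) (hp1 : p ≤ 1) (hx : x = 1 - p ∨ x = -p) :
    |x| ≤ 1 := by
  rcases hx with rfl | rfl <;> rw [abs_le] <;> constructor <;> linarith

lemma one_add_div_mul_one_sub_div_eq_zero (hp : p ≠ 0) (hq : 1 - p ≠ 0)
    (hx : x = 1 - p ∨ x = -p) : (1 + x / p) * (1 - x / (1 - p)) = 0 := by
  rcases hx with rfl | rfl <;> field_simp <;> ring

lemma one_add_div_sq (hp : p ≠ 0) (hx : x = 1 - p ∨ x = -p) :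
    (1 + x / p) ^ 2 = (1 + x / p) / p := by
  rcases hx with rfl | rfl <;> field_simp <;> ring

lemma one_sub_div_sq (hq : 1 - p ≠ 0) (hx : x = 1 - p ∨ x = -p) :
    (1 - x / (1 - p)) ^ 2 = (1 - x / (1 - p)) / (1 - p) := by
  rcases hx with rfl | rfl <;> field_simp <;> ring

end TwoPoint

section Moments

variable {Ω : Type*} [MeasurableSpace Ω] {μ : Measure Ω} {X Y W : Ω → ℝ}

lemma pVar_eq_integral_sq (hX : ∫ ω, X ω ∂μ = 0) : pVar μ X = ∫ ω, X ω ^ 2 ∂μ := by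
  simp only [pVar, hX, sub_zero]

lemma pCov_eq_zero_of_mul_eq_zero (hXY : ∀ ω, X ω * Y ω = 0) (hX : ∫ ω, X ω ∂μ = 0) :
    pCov μ X Y = 0 := by
  simp only [pCov, hXY, integral_zero, hX, zero_mul, sub_zero]

lemma pVar_sub_of_mul_eq_zero [IsFiniteMeasure μ] (hX : MemLp X 2 μ) (hY : MemLp Y 2 μ)
    (hXY : ∀ ω, X ω * Y ω = 0) (hX0 : ∫ ω, X ω ∂μ = 0) (hY0 : ∫ ω, Y ω ∂μ = 0) :
    pVar μ (fun ω => X ω - Y ω) = ∫ ω, X ω ^ 2 ∂μ + ∫ ω, Y ω ^ 2 ∂μ := by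
  have hmean : ∫ ω, X ω - Y ω ∂μ = 0 := by
    rw [integral_sub (hX.integrable one_le_two) (hY.integrable one_le_two), hX0, hY0, sub_zero]
  have hsq : ∀ ω, (X ω - Y ω) ^ 2 = X ω ^ 2 + Y ω ^ 2 := fun ω => by
    linear_combination -2 * hXY ω
  rw [pVar_eq_integral_sq hmean, integral_congr_ae (ae_of_all _ hsq),
    integral_add hX.integrable_sq hY.integrable_sq]

lemma integral_sq_mul_weight (hXW : IndepFun X W μ) (hX : AEStronglyMeasurable X μ)
    (hW : AEStronglyMeasurable W μ) (hW1 : ∫ ω, W ω ∂μ = 1) {c : ℝ}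
    (hWsq : ∀ ω, W ω ^ 2 = W ω / c) :
    ∫ ω, (X ω * W ω) ^ 2 ∂μ = (∫ ω, X ω ^ 2 ∂μ) / c := by
  have hX2W : IndepFun (fun ω => X ω ^ 2) W μ :=
    hXW.comp (measurable_id.pow_const 2) measurable_id
  have hsq : ∀ ω, (X ω * W ω) ^ 2 = X ω ^ 2 * W ω / c := fun ω => by
    rw [mul_pow, hWsq, mul_div_assoc]
  rw [integral_congr_ae (ae_of_all _ hsq), integral_div,
    hX2W.integral_fun_mul_eq_mul_integral (hX.pow 2) hW, hW1, mul_one]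

end Moments

theorem variance_of_influence_term_general {Ω : Type*} [MeasurableSpace Ω] (μ : Measure Ω)
    [IsProbabilityMeasure μ]
    (ε0 ε1 η : Ω → ℝ) (p : ℝ)
    (hp0 : 0 < p) (hp1 : p < 1)
    (hmeasη : Measurable η)
    -- finite second moments
    (hL2_0 : MemLp ε0 2 μ) (hL2_1 : MemLp ε1 2 μ)
    -- mean zero
    (hm0 : ∫ ω, ε0 ω ∂μ = 0) (hm1 : ∫ ω, ε1 ω ∂μ = 0) (hmη : ∫ ω, η ω ∂μ = 0)
    -- (ε⁽⁰⁾, ε⁽¹⁾) independent of η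
    (hindep : IndepFun (fun ω => (ε0 ω, ε1 ω)) η μ)
    -- η takes value 1 − p with probability p and −p with probability 1 − p
    (hηval : ∀ ω, η ω = 1 - p ∨ η ω = -p) :
    pVar μ (fun ω => ε1 ω * (1 + η ω / p) - ε0 ω * (1 - η ω / (1 - p))) =
        pVar μ ε1 / p + pVar μ ε0 / (1 - p) ∧
      pCov μ (fun ω => ε1 ω * (1 + η ω / p)) (fun ω => ε0 ω * (1 - η ω / (1 - p))) = 0 := by
  have hp : p ≠ 0 := hp0.ne'
  have hq : 1 - p ≠ 0 := (sub_pos.mpr hp1).ne'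
  have hη : MemLp η ⊤ μ := memLp_top_of_bound hmeasη.aestronglyMeasurable 1 <| ae_of_all _
    fun ω => (Real.norm_eq_abs _).trans_le (abs_le_one_of_eq_or_eq hp0.le hp1.le (hηval ω))
  set A : Ω → ℝ := fun ω => 1 + η ω / p
  set B : Ω → ℝ := fun ω => 1 - η ω / (1 - p)
  have hA : MemLp A ⊤ μ := (memLp_const (1 : ℝ)).add (hη.mul_const p⁻¹)
  have hB : MemLp B ⊤ μ := (memLp_const (1 : ℝ)).sub (hη.mul_const (1 - p)⁻¹)
  have hEA : ∫ ω, A ω ∂μ = 1 := by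
    rw [integral_add (integrable_const 1) ((hη.integrable le_top).div_const p), integral_div, hmη]
    simp
  have hEB : ∫ ω, B ω ∂μ = 1 := by
    rw [integral_sub (integrable_const 1) ((hη.integrable le_top).div_const _), integral_div, hmη]
    simp
  have hiA : IndepFun ε1 A μ :=
    hindep.comp measurable_snd (measurable_const.add (measurable_id.div_const p))
  have hiB : IndepFun ε0 B μ :=
    hindep.comp measurable_fst (measurable_const.sub (measurable_id.div_const (1 - p)))
  have hdisjoint : ∀ ω, ε1 ω * A ω * (ε0 ω * B ω) = 0 := fun ω => by
    linear_combination ε1 ω * ε0 ω * one_add_div_mul_one_sub_div_eq_zero hp hq (hηval ω)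
  have hε1A : ∫ ω, ε1 ω * A ω ∂μ = 0 := by
    rw [hiA.integral_fun_mul_eq_mul_integral hL2_1.1 hA.1, hm1, zero_mul]
  have hε0B : ∫ ω, ε0 ω * B ω ∂μ = 0 := by
    rw [hiB.integral_fun_mul_eq_mul_integral hL2_0.1 hB.1, hm0, zero_mul]
  refine ⟨?_, pCov_eq_zero_of_mul_eq_zero hdisjoint hε1A⟩
  rw [pVar_sub_of_mul_eq_zero (hA.mul' hL2_1) (hB.mul' hL2_0) hdisjoint hε1A hε0B,
    integral_sq_mul_weight hiA hL2_1.1 hA.1 hEA fun ω => one_add_div_sq hp (hηval ω),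
    integral_sq_mul_weight hiB hL2_0.1 hB.1 hEB fun ω => one_sub_div_sq hq (hηval ω),
    pVar_eq_integral_sq hm1, pVar_eq_integral_sq hm0]

/-- Variance decomposition for the influence-function term of the DR estimator:
with `V = ε⁽¹⁾(1 + η/p) − ε⁽⁰⁾(1 − η/(1−p))`, one has
`Var(V) = (σ⁽¹⁾)²/p + (σ⁽⁰⁾)²/(1−p)`, and the covariance between the two summands
vanishes regardless of the dependence between `ε⁽⁰⁾` and `ε⁽¹⁾`. -/
theorem variance_of_influence_term {Ω : Type*} [MeasurableSpace Ω] (μ : Measure Ω)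
    [IsProbabilityMeasure μ]
    (ε0 ε1 η : Ω → ℝ) (p : ℝ)
    (hp0 : 0 < p) (hp1 : p < 1)
    (hmeas0 : Measurable ε0) (hmeas1 : Measurable ε1) (hmeasη : Measurable η)
    -- finite second moments
    (hL2_0 : MemLp ε0 2 μ) (hL2_1 : MemLp ε1 2 μ)
    -- mean zero
    (hm0 : ∫ ω, ε0 ω ∂μ = 0) (hm1 : ∫ ω, ε1 ω ∂μ = 0) (hmη : ∫ ω, η ω ∂μ = 0)
    -- (ε⁽⁰⁾, ε⁽¹⁾) independent of η
    (hindep : IndepFun (fun ω => (ε0 ω, ε1 ω)) η μ)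
    -- η takes value 1 − p with probability p and −p with probability 1 − p
    (hηval : ∀ ω, η ω = 1 - p ∨ η ω = -p)
    (hηdist : μ {ω | η ω = 1 - p} = ENNReal.ofReal p) :
    pVar μ (fun ω => ε1 ω * (1 + η ω / p) - ε0 ω * (1 - η ω / (1 - p))) =
        pVar μ ε1 / p + pVar μ ε0 / (1 - p) ∧
      pCov μ (fun ω => ε1 ω * (1 + η ω / p)) (fun ω => ε0 ω * (1 - η ω / (1 - p))) = 0 :=
  variance_of_influence_term_general μ ε0 ε1 η p hp0 hp1 hmeasη hL2_0 hL2_1 hm0 hm1 hmη hindep hηval
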